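/- Let $k$ be a field of characteristic different from $2$, $V$ a nonzero finite-dimensional $k$-vector space, and $\phi \in \mathrm{End}_k(V)$ such that every endomorphism of $V$ commuting with $\phi$ is a scalar multiple of the identity. Let $f \colon V \to V^*$ be a bijective linear map whose associated bilinear form $F(a,b) = f(a)(b)$ satisfies $F(\phi(a), b) = -F(a, \phi(b))$ for all $a, b \in V$. Then either $F$ is symmetric or $F$ is skew-symmetric, and not both. -/
import Mathlib


/-- Over a field of characteristic ≠ 2, let `V` be a nonzero
finite-dimensional vector space and `φ` an endomorphism such that every
endomorphism commuting with `φ` is scalar. If `f : V → V*` is bijective and its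
bilinear form `F(a,b) = f(a)(b)` satisfies `F(φ a, b) = -F(a, φ b)`, then `F` is
either symmetric or skew-symmetric, and not both. -/
theorem fixed_pairing_symm_or_skew
    (k : Type*) [Field k] (h2 : (2 : k) ≠ 0)
    (V : Type*) [AddCommGroup V] [Module k V] [FiniteDimensional k V]
    [Nontrivial V]
    (φ : V →ₗ[k] V)
    (hsimple : ∀ ψ : V →ₗ[k] V, ψ ∘ₗ φ = φ ∘ₗ ψ →
      ∃ c : k, ψ = c • (LinearMap.id : V →ₗ[k] V))
    (f : V →ₗ[k] Module.Dual k V)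
    (hbij : Function.Bijective f)
    (hint : ∀ a b : V, f (φ a) b = -f a (φ b)) :
    Xor' (∀ a b : V, f a b = f b a) (∀ a b : V, f a b = -f b a) := by
  set e : V ≃ₗ[k] Module.Dual k V := LinearEquiv.ofBijective f hbij with he
  have hef : ∀ x, e x = f x := fun x => rfl
  set ψ : V →ₗ[k] V := e.symm.toLinearMap ∘ₗ f.flip with hψ
  have hfψ : ∀ x, f (ψ x) = f.flip x := by
    intro x
    have : e (ψ x) = f.flip x := e.apply_symm_apply _
    simpa [hef] using this
  have hcomm : ψ ∘ₗ φ = φ ∘ₗ ψ := by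
    apply LinearMap.ext
    intro x
    apply hbij.injective
    show f (ψ (φ x)) = f (φ (ψ x))
    rw [hfψ]
    apply LinearMap.ext
    intro b
    have h1 : f (φ (ψ x)) b = -f (ψ x) (φ b) := hint _ _
    rw [h1, hfψ]
    simp only [LinearMap.flip_apply]
    rw [show f (φ b) x = -f b (φ x) from hint _ _]
    ring
  obtain ⟨c, hc⟩ := hsimple ψ hcomm
  have key : ∀ a b : V, f b a = c * f a b := by
    intro a b
    have := hfψ a
    rw [hc] at this
    have := congrArg (fun g => g b) this
    simpa [LinearMap.flip_apply, smul_eq_mul] using this.symm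
  obtain ⟨a, ha⟩ : ∃ a : V, f a ≠ 0 := by
    by_contra h
    push_neg at h
    obtain ⟨x, hx⟩ := exists_ne (0 : V)
    exact hx (hbij.injective (by rw [h x, map_zero]))
  obtain ⟨b, hb⟩ : ∃ b : V, f a b ≠ 0 := by
    by_contra h
    push_neg at h
    exact ha (LinearMap.ext h)
  have hc2 : c * c = 1 := by
    have h1 : f a b = c * (c * f a b) := by rw [← key a b]; exact key b a
    have : (c * c - 1) * f a b = 0 := by linear_combination -h1
    rcases mul_eq_zero.mp this with h | h
    · linear_combination h
    · exact absurd h hb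
  have hc1 : c = 1 ∨ c = -1 := by
    have : (c - 1) * (c + 1) = 0 := by linear_combination hc2
    rcases mul_eq_zero.mp this with h | h
    · left; linear_combination h
    · right; linear_combination h
  rcases hc1 with h | h
  · left
    refine ⟨fun x y => by rw [key y x, h, one_mul], fun hskew => ?_⟩
    have hs : f b a = f a b := by rw [key a b, h, one_mul]
    have h1 := hskew a b
    have : (2 : k) * f a b = 0 := by linear_combination h1 - hs
    exact hb (by
      have := mul_eq_zero.mp this
      tauto)
  · right
    refine ⟨fun x y => by rw [key y x, h]; ring, fun hsym => ?_⟩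
    have hs : f b a = -f a b := by rw [key a b, h]; ring
    have h1 := hsym a b
    have : (2 : k) * f a b = 0 := by linear_combination h1 + hs
    exact hb (by
      have := mul_eq_zero.mp this
      tauto)
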